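/- Let σ² > 0 with σ² > (2π)^{−1} e^{−3}, and let d > 0. Then the function γ ↦ − (d²/σ²) · (2πσ²)^{−γ/(2(1+γ))} · (1+γ)^{−3/2} is strictly increasing on the interval [0, 1]. In particular, its unique minimizer over [0, 1] is γ = 0. -/

import Mathlib

open Real

/-!
Writing `L = log (2πσ²)`, the criterion is `−(d²/σ²) · exp φ(γ)` with
`φ(γ) = −γ L / (2(1+γ)) − (3/2) log (1+γ)`, so it suffices that `φ` is strictly decreasing.
For `0 ≤ x < y`, the bound `log ((1+y)/(1+x)) > (y−x)/(1+y)` gives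
`φ(x) − φ(y) > (y−x)/(2(1+y)) · (3 + L/(1+x))`, which is positive as soon as `L > −3`,
i.e. `2πσ² > e⁻³`.
-/

/-- Population criterion `Q(γ) = −(d²/σ²)(2πσ²)^{−γ/(2(1+γ))}(1+γ)^{−3/2}`. -/
noncomputable def Qcrit (d s2 γ : ℝ) : ℝ :=
  -(d ^ 2 / s2) * (2 * Real.pi * s2) ^ (-(γ / (2 * (1 + γ)))) * (1 + γ) ^ (-(3 : ℝ) / 2)

noncomputable def critExponent (L γ : ℝ) : ℝ :=
  -(γ / (2 * (1 + γ))) * L - 3 / 2 * log (1 + γ)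

theorem Qcrit_eq_exp_critExponent {d s2 γ : ℝ} (hs2 : 0 < s2) (hγ : -1 < γ) :
    Qcrit d s2 γ = -(d ^ 2 / s2) * exp (critExponent (log (2 * π * s2)) γ) := by
  rw [Qcrit, mul_assoc, rpow_def_of_pos (by positivity), rpow_def_of_pos (by linarith),
    ← exp_add, critExponent]
  ring_nf

theorem critExponent_strictAntiOn {L : ℝ} (hL : -3 < L) :
    StrictAntiOn (critExponent L) (Set.Ici 0) := by
  intro x (hx : 0 ≤ x) y _ hxy
  have hx1 : 0 < 1 + x := by linarith
  have hy1 : 0 < 1 + y := by linarith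
  have hlog : (y - x) / (1 + y) < log (1 + y) - log (1 + x) := by
    have h := log_lt_sub_one_of_pos (div_pos hx1 hy1)
      (by rw [Ne, div_eq_one_iff_eq hy1.ne']; linarith)
    rw [log_div hx1.ne' hy1.ne'] at h
    have : (y - x) / (1 + y) = 1 - (1 + x) / (1 + y) := by field_simp; ring
    linarith
  have hfactor : 0 < 3 + L / (1 + x) := by
    rw [← sub_lt_iff_lt_add', zero_sub, lt_div_iff₀ hx1]
    nlinarith
  rw [← sub_pos]
  calc 0 < (y - x) / (1 + y) * (3 + L / (1 + x)) / 2 :=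
        div_pos (mul_pos (div_pos (sub_pos.2 hxy) hy1) hfactor) two_pos
    _ = (y / (2 * (1 + y)) - x / (2 * (1 + x))) * L + 3 / 2 * ((y - x) / (1 + y)) := by
        field_simp; ring
    _ < (y / (2 * (1 + y)) - x / (2 * (1 + x))) * L + 3 / 2 * (log (1 + y) - log (1 + x)) := by
        gcongr
    _ = critExponent L x - critExponent L y := by unfold critExponent; ring

theorem Qcrit_strictMonoOn_Ici {d s2 : ℝ} (hd : d ≠ 0) (hs2 : exp (-3) < 2 * π * s2) :
    StrictMonoOn (Qcrit d s2) (Set.Ici 0) := by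
  have hs2_pos : 0 < s2 := pos_of_mul_pos_right ((exp_pos _).trans hs2) two_pi_pos.le
  have hL : -3 < log (2 * π * s2) := (lt_log_iff_exp_lt (by positivity)).2 hs2
  intro x (hx : 0 ≤ x) y (hy : 0 ≤ y) hxy
  rw [Qcrit_eq_exp_critExponent hs2_pos (by linarith),
    Qcrit_eq_exp_critExponent hs2_pos (by linarith)]
  have hcoef : -(d ^ 2 / s2) < 0 := neg_neg_of_pos (by positivity)
  exact mul_lt_mul_of_neg_left (exp_lt_exp.2 (critExponent_strictAntiOn hL hx hy hxy)) hcoef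

theorem Qcrit_strictMonoOn_general (s2 d : ℝ)
    (hs2' : (2 * Real.pi)⁻¹ * Real.exp (-3) < s2) (hd : 0 < d) :
    StrictMonoOn (fun γ => Qcrit d s2 γ) (Set.Icc 0 1) ∧
      ∀ γ ∈ Set.Icc (0 : ℝ) 1, γ ≠ 0 → Qcrit d s2 0 < Qcrit d s2 γ := by
  have hmono : StrictMonoOn (Qcrit d s2) (Set.Icc 0 1) :=
    (Qcrit_strictMonoOn_Ici hd.ne' ((inv_mul_lt_iff₀ two_pi_pos).1 hs2')).mono
      Set.Icc_subset_Ici_self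
  exact ⟨hmono, fun γ hγ hγ0 =>
    hmono (Set.left_mem_Icc.2 zero_le_one) hγ (lt_of_le_of_ne hγ.1 (Ne.symm hγ0))⟩

/-- If `σ² > (2π)⁻¹ e⁻³`, the population criterion is strictly increasing on `[0,1]`,
so its unique minimizer over `[0,1]` is `γ = 0`. -/
theorem Qcrit_strictMonoOn (s2 d : ℝ) (hs2 : 0 < s2)
    (hs2' : (2 * Real.pi)⁻¹ * Real.exp (-3) < s2) (hd : 0 < d) :
    StrictMonoOn (fun γ => Qcrit d s2 γ) (Set.Icc 0 1) ∧
      ∀ γ ∈ Set.Icc (0 : ℝ) 1, γ ≠ 0 → Qcrit d s2 0 < Qcrit d s2 γ :=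
  Qcrit_strictMonoOn_general s2 d hs2' hd
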